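/- Let Y be a Hadamard manifold with sectional curvature ≤ −1 and let A, B be disjoint closed convex subsets. If x_i ∈ A is a sequence with dist(x_i, B) → D := dist(A, B) > 0, then the sequence x_i is Cauchy; consequently the pair of nearest points realizing dist(A,B) exists and is unique. -/

import Mathlib

noncomputable section
open Metric Set

/-- `γ` restricted to `[a,b]` is a unit-speed (minimizing) geodesic segment. -/
def IsGeodesicOn {X : Type*} [MetricSpace X] (γ : ℝ → X) (a b : ℝ) : Prop :=
  a ≤ b ∧ ∀ s ∈ Set.Icc a b, ∀ t ∈ Set.Icc a b, dist (γ s) (γ t) = |s - t|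

/-- Every pair of points is joined by a geodesic segment. -/
def IsGeodesicSpace (X : Type*) [MetricSpace X] : Prop :=
  ∀ x y : X, ∃ γ : ℝ → X, IsGeodesicOn γ 0 (dist x y) ∧ γ 0 = x ∧ γ (dist x y) = y

/-- Comparison condition defining CAT spaces with model space `M`:
for any geodesic triangle and a comparison triangle in `M`, distances between
points on two sides issuing from a common vertex are bounded by the
corresponding distances in the comparison triangle. -/
def CATWith (M : Type*) [MetricSpace M] (X : Type*) [MetricSpace X] : Prop :=
  IsGeodesicSpace X ∧
  ∀ (p q r : X) (γ δ : ℝ → X),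
    IsGeodesicOn γ 0 (dist p q) → γ 0 = p → γ (dist p q) = q →
    IsGeodesicOn δ 0 (dist p r) → δ 0 = p → δ (dist p r) = r →
    ∀ (p' q' r' : M) (γ' δ' : ℝ → M),
      dist p' q' = dist p q → dist p' r' = dist p r → dist q' r' = dist q r →
      IsGeodesicOn γ' 0 (dist p q) → γ' 0 = p' → γ' (dist p q) = q' →
      IsGeodesicOn δ' 0 (dist p r) → δ' 0 = p' → δ' (dist p r) = r' →
      ∀ s ∈ Set.Icc (0:ℝ) (dist p q), ∀ t ∈ Set.Icc (0:ℝ) (dist p r),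
        dist (γ s) (δ t) ≤ dist (γ' s) (δ' t)

/-- A CAT(-1) space: comparison with the hyperbolic plane of curvature `-1`. -/
def CATMinusOne (X : Type*) [MetricSpace X] : Prop := CATWith UpperHalfPlane X

/-- A CAT(0) space: comparison with the Euclidean plane. -/
def CATZero (X : Type*) [MetricSpace X] : Prop := CATWith (EuclideanSpace ℝ (Fin 2)) X

/-- A subset is (geodesically) convex if it contains every geodesic segment
between any two of its points. -/
def GConvex {X : Type*} [MetricSpace X] (A : Set X) : Prop :=
  ∀ (γ : ℝ → X) (a b : ℝ), IsGeodesicOn γ a b → γ a ∈ A → γ b ∈ A →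
    ∀ t ∈ Set.Icc a b, γ t ∈ A

/-- Distance between two subsets: the infimum of distances between their points. -/
def setDist {X : Type*} [MetricSpace X] (A B : Set X) : ℝ :=
  sInf ((fun p : X × X => dist p.1 p.2) '' A ×ˢ B)

end

/-!
Comparison with the hyperbolic plane turns the hyperbolic law of cosines into upper bounds for
distances in `Y`. Let `x, y ∈ A` and `z, w ∈ B` with `dist y z` and `dist x w` at most `D + ε`,
and cut the quadrilateral `x y z w` along the diagonal `[x, z]`. The midpoints of `[x, y] ⊆ A`
and `[z, w] ⊆ B` are at distance at least `D`, which forces both triangles to be almost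
degenerate (or the comparison angle at `x` or `z` to be obtuse, which directly makes `[x, y]`
short). Then `[x, y]` and `[z, w]` fellow-travel the diagonal, so either a point of `[x, y]` or
`y` itself comes closer than `D` to `w`, unless `dist x y` is small: a geodesic cannot run along
the boundary of the `D`-neighbourhood of a segment. Hence almost minimizing sequences on either
side are Cauchy, their limits realize `D`, and two realizing pairs coincide.
-/

open Real Set Metric Filter Topology

namespace Real

theorem cosh_eq_two_mul_cosh_half_sq (x : ℝ) : cosh x = 2 * cosh (x / 2) ^ 2 - 1 := by
  have h := cosh_two_mul (x / 2)
  rw [mul_div_cancel₀ x two_ne_zero, sinh_sq] at h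
  linarith

theorem sinh_eq_two_mul_sinh_half_mul_cosh_half (x : ℝ) :
    sinh x = 2 * sinh (x / 2) * cosh (x / 2) := by
  rw [← sinh_two_mul, mul_div_cancel₀ x two_ne_zero]

theorem cosh_le_cosh_iff_of_nonneg {x y : ℝ} (hx : 0 ≤ x) (hy : 0 ≤ y) :
    cosh x ≤ cosh y ↔ x ≤ y :=
  cosh_strictMonoOn.le_iff_le hx hy

theorem cosh_add_le (x y : ℝ) : cosh (x + y) ≤ (cosh (2 * x) + cosh (2 * y)) / 2 := by
  rw [cosh_add, cosh_two_mul, cosh_two_mul]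
  nlinarith [sq_nonneg (cosh x - cosh y), sq_nonneg (sinh x - sinh y)]

theorem sinh_sq_le_mul_sinh_half_sq_mul_sinh_half_sq {D a b s : ℝ} (hD : 0 < D) (hs : 0 ≤ s)
    (ha : s ≤ a) (hb : s ≤ b) (hDb : D ≤ b) :
    sinh s ^ 2 ≤ 4 * (1 + 1 / sinh (D / 2) ^ 2) * sinh (a / 2) ^ 2 * sinh (b / 2) ^ 2 := by
  have hD2 : 0 < sinh (D / 2) ^ 2 := pow_pos (sinh_pos_iff.2 (half_pos hD)) 2
  have hsa : sinh (s / 2) ^ 2 ≤ sinh (a / 2) ^ 2 :=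
    pow_le_pow_left₀ (sinh_nonneg_iff.2 (by linarith)) (sinh_le_sinh.2 (by linarith)) 2
  have hsb : sinh (s / 2) ^ 2 ≤ sinh (b / 2) ^ 2 :=
    pow_le_pow_left₀ (sinh_nonneg_iff.2 (by linarith)) (sinh_le_sinh.2 (by linarith)) 2
  have hDb2 : sinh (D / 2) ^ 2 ≤ sinh (b / 2) ^ 2 :=
    pow_le_pow_left₀ (sinh_nonneg_iff.2 (by linarith)) (sinh_le_sinh.2 (by linarith)) 2
  have hcosh : cosh (s / 2) ^ 2 ≤ (1 + 1 / sinh (D / 2) ^ 2) * sinh (b / 2) ^ 2 := by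
    rw [cosh_sq', add_mul, one_div_mul_eq_div, one_mul]
    have : 1 ≤ sinh (b / 2) ^ 2 / sinh (D / 2) ^ 2 := (one_le_div hD2).2 hDb2
    linarith
  rw [sinh_eq_two_mul_sinh_half_mul_cosh_half s]
  calc (2 * sinh (s / 2) * cosh (s / 2)) ^ 2 = 4 * sinh (s / 2) ^ 2 * cosh (s / 2) ^ 2 := by ring
    _ ≤ 4 * sinh (a / 2) ^ 2 * ((1 + 1 / sinh (D / 2) ^ 2) * sinh (b / 2) ^ 2) := by
      gcongr
    _ = _ := by ring

end Real

/-- The cosine of the angle between the sides `a` and `b` of a hyperbolic triangle with sides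
`a, b, c`, by the hyperbolic law of cosines. -/
noncomputable def comparisonCos (a b c : ℝ) : ℝ :=
  (cosh a * cosh b - cosh c) / (sinh a * sinh b)

theorem cosh_eq_sub_comparisonCos {a b : ℝ} (ha : 0 < a) (hb : 0 < b) (c : ℝ) :
    cosh c = cosh a * cosh b - sinh a * sinh b * comparisonCos a b c := by
  have := (sinh_pos_iff.2 ha).ne'
  have := (sinh_pos_iff.2 hb).ne'
  unfold comparisonCos
  field_simp
  ring

theorem cosh_mul_cosh_le_of_comparisonCos_nonpos {a b c : ℝ} (ha : 0 < a) (hb : 0 < b)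
    (h : comparisonCos a b c ≤ 0) : cosh a * cosh b ≤ cosh c := by
  rw [cosh_eq_sub_comparisonCos ha hb c]
  nlinarith [mul_pos (sinh_pos_iff.2 ha) (sinh_pos_iff.2 hb)]

theorem comparisonCos_mem_Icc {a b c : ℝ} (ha : 0 < a) (hb : 0 < b) (h₁ : |a - b| ≤ c)
    (h₂ : c ≤ a + b) : comparisonCos a b c ∈ Icc (-1) 1 := by
  have hab : 0 < sinh a * sinh b := mul_pos (sinh_pos_iff.2 ha) (sinh_pos_iff.2 hb)
  have hc : 0 ≤ c := (abs_nonneg _).trans h₁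
  have hsub : cosh (a - b) ≤ cosh c := cosh_le_cosh.2 (by rwa [abs_of_nonneg hc])
  have hadd : cosh c ≤ cosh (a + b) :=
    cosh_le_cosh.2 (by rw [abs_of_nonneg hc, abs_of_nonneg (by linarith)]; exact h₂)
  rw [cosh_sub] at hsub
  rw [cosh_add] at hadd
  unfold comparisonCos
  constructor
  · rw [le_div_iff₀ hab]; linarith
  · rw [div_le_one hab]; linarith

noncomputable def triangleDefect (a b c : ℝ) : ℝ :=
  sinh (a / 2) ^ 2 * sinh (b / 2) ^ 2 * (1 - comparisonCos a b c ^ 2)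

namespace UpperHalfPlane

noncomputable def vertical (s : ℝ) : ℍ := UpperHalfPlane.mk ⟨0, exp s⟩ (exp_pos s)

noncomputable def tiltDenom (μ t : ℝ) : ℝ := μ * (exp t ^ 2 - 1) + 1

theorem tiltDenom_pos (μ : unitInterval) (t : ℝ) : 0 < tiltDenom μ t := by
  have h0 := μ.2.1
  have h1 := μ.2.2
  have ht : 0 < exp t ^ 2 := by positivity
  unfold tiltDenom
  rcases le_total (μ : ℝ) (1 / 2) with h | h <;> nlinarith

/-- The image of `vertical` under the rotation about `i` by the angle `θ` with
`cos θ = 1 - 2μ`. -/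
noncomputable def tilted (μ : unitInterval) (t : ℝ) : ℍ :=
  UpperHalfPlane.mk ⟨√(μ * (1 - μ)) * (exp t ^ 2 - 1) / tiltDenom μ t, exp t / tiltDenom μ t⟩
    (div_pos (exp_pos t) (tiltDenom_pos μ t))

theorem cosh_dist_vertical (s t : ℝ) : cosh (dist (vertical s) (vertical t)) = cosh (s - t) := by
  rw [cosh_dist']
  simp only [vertical, re, im, cosh_eq, neg_sub, exp_sub]
  field_simp
  ring

theorem cosh_dist_vertical_tilted (μ : unitInterval) (s t : ℝ) :
    cosh (dist (vertical s) (tilted μ t)) = cosh s * cosh t - sinh s * sinh t * (1 - 2 * μ) := by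
  have hμ : 0 ≤ (μ : ℝ) * (1 - μ) := mul_nonneg μ.2.1 (sub_nonneg.2 μ.2.2)
  have hQ := (tiltDenom_pos μ t).ne'
  rw [cosh_dist']
  simp only [vertical, tilted, re, im, zero_sub, neg_sq, div_pow, mul_pow, sq_sqrt hμ, cosh_eq,
    sinh_eq, exp_neg]
  unfold tiltDenom at hQ ⊢
  field_simp
  ring

theorem cosh_dist_tilted (μ : unitInterval) (s t : ℝ) :
    cosh (dist (tilted μ s) (tilted μ t)) = cosh (s - t) := by
  have hμ : 0 ≤ (μ : ℝ) * (1 - μ) := mul_nonneg μ.2.1 (sub_nonneg.2 μ.2.2)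
  have hQs := (tiltDenom_pos μ s).ne'
  have hQt := (tiltDenom_pos μ t).ne'
  rw [cosh_dist']
  simp only [tilted, re, im]
  rw [show √(μ * (1 - μ)) * (exp s ^ 2 - 1) / tiltDenom μ s
      - √(μ * (1 - μ)) * (exp t ^ 2 - 1) / tiltDenom μ t
      = √(μ * (1 - μ)) * ((exp s ^ 2 - 1) / tiltDenom μ s - (exp t ^ 2 - 1) / tiltDenom μ t) by
    ring, mul_pow, sq_sqrt hμ, cosh_eq, neg_sub, exp_sub, exp_sub]
  unfold tiltDenom at hQs hQt ⊢
  field_simp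
  ring

theorem dist_vertical (s t : ℝ) : dist (vertical s) (vertical t) = |s - t| :=
  cosh_strictMonoOn.injOn dist_nonneg (abs_nonneg (s - t)) (by rw [cosh_dist_vertical, cosh_abs])

theorem dist_tilted (μ : unitInterval) (s t : ℝ) : dist (tilted μ s) (tilted μ t) = |s - t| :=
  cosh_strictMonoOn.injOn dist_nonneg (abs_nonneg (s - t)) (by rw [cosh_dist_tilted, cosh_abs])

theorem tilted_zero (μ : unitInterval) : tilted μ 0 = vertical 0 := by
  ext
  simp [tilted, vertical, tiltDenom]

end UpperHalfPlane

section MetricSpace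

variable {X : Type*} [MetricSpace X] {A B : Set X} {γ : ℝ → X} {p q r : X} {s t : ℝ}

def IsSegment (γ : ℝ → X) (p q : X) : Prop :=
  IsGeodesicOn γ 0 (dist p q) ∧ γ 0 = p ∧ γ (dist p q) = q

theorem IsSegment.dist_eq (hγ : IsSegment γ p q) (hs : s ∈ Icc 0 (dist p q))
    (ht : t ∈ Icc 0 (dist p q)) : dist (γ s) (γ t) = |s - t| :=
  hγ.1.2 s hs t ht

theorem IsSegment.symm (hγ : IsSegment γ p q) : IsSegment (fun t ↦ γ (dist p q - t)) q p := by
  rw [IsSegment, dist_comm q p]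
  refine ⟨⟨hγ.1.1, fun s hs t ht ↦ ?_⟩, by simpa using hγ.2.2, by simpa using hγ.2.1⟩
  rw [hγ.dist_eq ⟨by linarith [hs.2], by linarith [hs.1]⟩ ⟨by linarith [ht.2], by linarith [ht.1]⟩,
    abs_sub_comm]
  ring_nf

theorem GConvex.mem_of_isSegment (hA : GConvex A) (hγ : IsSegment γ p q)
    (hp : p ∈ A) (hq : q ∈ A) (hs : s ∈ Icc 0 (dist p q)) : γ s ∈ A :=
  hA γ 0 _ hγ.1 (hγ.2.1 ▸ hp) (hγ.2.2.symm ▸ hq) s hs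

theorem setDist_le_dist {a b : X} (ha : a ∈ A) (hb : b ∈ B) : setDist A B ≤ dist a b :=
  csInf_le ⟨0, by rintro _ ⟨p, -, rfl⟩; exact dist_nonneg⟩ ⟨(a, b), ⟨ha, hb⟩, rfl⟩

theorem nonempty_of_setDist_ne_zero (h : setDist A B ≠ 0) : B.Nonempty := by
  contrapose! h
  simp [setDist, h]

theorem exists_seq_tendsto_dist_of_tendsto_infDist (hB : B.Nonempty) {x : ℕ → X} {D : ℝ}
    (hx : Tendsto (fun n ↦ infDist (x n) B) atTop (𝓝 D)) :
    ∃ b : ℕ → X, (∀ n, b n ∈ B) ∧ Tendsto (fun n ↦ dist (x n) (b n)) atTop (𝓝 D) := by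
  choose b hb hxb using fun n : ℕ ↦
    (infDist_lt_iff hB).1 (lt_add_of_pos_right (infDist (x n) B) (Nat.one_div_pos_of_nat (n := n)))
  refine ⟨b, hb, tendsto_of_tendsto_of_tendsto_of_le_of_le hx
    (by simpa using hx.add tendsto_one_div_add_atTop_nhds_zero_nat)
    (fun n ↦ infDist_le_dist_of_mem (hb n)) (fun n ↦ (hxb n).le)⟩

theorem comparisonCos_dist_mem_Icc (hpq : 0 < dist p q) (hpr : 0 < dist p r) :
    comparisonCos (dist p q) (dist p r) (dist q r) ∈ Icc (-1) 1 :=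
  comparisonCos_mem_Icc hpq hpr (by simpa only [dist_comm] using abs_dist_sub_le q r p)
    (dist_triangle_left q r p)

theorem triangleDefect_nonneg (hpq : 0 < dist p q) (hpr : 0 < dist p r) :
    0 ≤ triangleDefect (dist p q) (dist p r) (dist q r) := by
  obtain ⟨h₁, h₂⟩ := comparisonCos_dist_mem_Icc hpq hpr
  unfold triangleDefect
  have : 0 ≤ 1 - comparisonCos (dist p q) (dist p r) (dist q r) ^ 2 := by nlinarith
  positivity

end MetricSpace

namespace CATMinusOne

open UpperHalfPlane

variable {Y : Type*} [MetricSpace Y] {A B : Set Y} {D D' ρ : ℝ} {p q r x y z w : Y}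
  {γ δ β : ℝ → Y}

theorem exists_isSegment (hY : CATMinusOne Y) (p q : Y) : ∃ γ, IsSegment γ p q := hY.1 p q

/-- The right-hand side is `cosh` of the distance between the corresponding points of the
comparison triangle in the hyperbolic plane. -/
theorem cosh_dist_le (hY : CATMinusOne Y) (hγ : IsSegment γ p q) (hδ : IsSegment δ p r)
    (hpq : 0 < dist p q) (hpr : 0 < dist p r) {s t : ℝ} (hs : s ∈ Icc 0 (dist p q))
    (ht : t ∈ Icc 0 (dist p r)) :
    cosh (dist (γ s) (δ t)) ≤
      cosh s * cosh t - sinh s * sinh t * comparisonCos (dist p q) (dist p r) (dist q r) := by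
  obtain ⟨hX₁, hX₂⟩ := comparisonCos_dist_mem_Icc hpq hpr
  set X := comparisonCos (dist p q) (dist p r) (dist q r) with hX
  let μ : unitInterval := ⟨(1 - X) / 2, by constructor <;> linarith⟩
  have hμ : 1 - 2 * (μ : ℝ) = X := by simp only [μ]; ring
  have hq' : dist (vertical 0) (vertical (dist p q)) = dist p q := by
    rw [dist_vertical, zero_sub, abs_neg, abs_of_nonneg dist_nonneg]
  have hr' : dist (vertical 0) (tilted μ (dist p r)) = dist p r := by
    rw [← tilted_zero μ, dist_tilted, zero_sub, abs_neg, abs_of_nonneg dist_nonneg]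
  have hqr' : dist (vertical (dist p q)) (tilted μ (dist p r)) = dist q r := by
    refine cosh_strictMonoOn.injOn dist_nonneg dist_nonneg ?_
    rw [cosh_dist_vertical_tilted, hμ, hX, ← cosh_eq_sub_comparisonCos hpq hpr]
  have hcomp := hY.2 p q r γ δ hγ.1 hγ.2.1 hγ.2.2 hδ.1 hδ.2.1 hδ.2.2 _ _ _ vertical (tilted μ)
    hq' hr' hqr' ⟨hpq.le, fun s _ t _ ↦ dist_vertical s t⟩ rfl rfl
    ⟨hpr.le, fun s _ t _ ↦ dist_tilted μ s t⟩ (tilted_zero μ) rfl s hs t ht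
  rw [← hμ, ← cosh_dist_vertical_tilted]
  exact (cosh_le_cosh_iff_of_nonneg dist_nonneg dist_nonneg).2 hcomp

theorem two_mul_cosh_half_mul_cosh_dist_midpoint_le (hY : CATMinusOne Y) (hγ : IsSegment γ p q)
    (hpq : 0 < dist p q) (hpr : 0 < dist p r) :
    2 * cosh (dist p q / 2) * cosh (dist (γ (dist p q / 2)) r) ≤
      cosh (dist p r) + cosh (dist q r) := by
  obtain ⟨δ, hδ⟩ := hY.exists_isSegment p r
  have h := hY.cosh_dist_le hγ hδ hpq hpr (s := dist p q / 2) ⟨by positivity, by linarith⟩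
    ⟨hpr.le, le_rfl⟩
  rw [hδ.2.2] at h
  have hc := cosh_eq_sub_comparisonCos hpq hpr (dist q r)
  rw [cosh_eq_two_mul_cosh_half_sq (dist p q),
    sinh_eq_two_mul_sinh_half_mul_cosh_half (dist p q)] at hc
  have := mul_le_mul_of_nonneg_left h (by positivity : (0 : ℝ) ≤ 2 * cosh (dist p q / 2))
  linarith

theorem cosh_two_mul_dist_midpoints_add_le (hY : CATMinusOne Y) (hγ : IsSegment γ p q)
    (hδ : IsSegment δ p r) (hpq : 0 < dist p q) (hpr : 0 < dist p r) :
    cosh (2 * dist (γ (dist p q / 2)) (δ (dist p r / 2))) +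
      2 * triangleDefect (dist p q) (dist p r) (dist q r) ≤ cosh (dist q r) := by
  have h := hY.cosh_dist_le hγ hδ hpq hpr (s := dist p q / 2) (t := dist p r / 2)
    ⟨by positivity, by linarith⟩ ⟨by positivity, by linarith⟩
  set X := comparisonCos (dist p q) (dist p r) (dist q r)
  have hsq := pow_le_pow_left₀ (zero_le_one.trans (one_le_cosh _)) h 2
  have hc := cosh_eq_sub_comparisonCos hpq hpr (dist q r)
  rw [cosh_eq_two_mul_cosh_half_sq (dist p q), cosh_eq_two_mul_cosh_half_sq (dist p r),
    sinh_eq_two_mul_sinh_half_mul_cosh_half (dist p q),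
    sinh_eq_two_mul_sinh_half_mul_cosh_half (dist p r)] at hc
  rw [cosh_two_mul, sinh_sq, triangleDefect, hc]
  linear_combination 2 * hsq + (2 - 2 * cosh (dist p r / 2) ^ 2) * cosh_sq (dist p q / 2) -
    2 * sinh (dist p q / 2) ^ 2 * cosh_sq (dist p r / 2)

theorem dist_le_of_triangleDefect_le (hY : CATMinusOne Y) (hγ : IsSegment γ p q)
    (hδ : IsSegment δ p r) (hpq : 0 < dist p q) (hpr : 0 < dist p r)
    (hX : 0 ≤ comparisonCos (dist p q) (dist p r) (dist q r)) {ε : ℝ} (hD : 0 < D)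
    (hDr : D ≤ dist p r) (hdef : triangleDefect (dist p q) (dist p r) (dist q r) ≤ ε)
    (hρ : 1 + 4 * (1 + 1 / sinh (D / 2) ^ 2) * ε ≤ cosh ρ) (hρ0 : 0 ≤ ρ) {s : ℝ} (hs : 0 ≤ s)
    (hsq : s ≤ dist p q) (hsr : s ≤ dist p r) : dist (γ s) (δ s) ≤ ρ := by
  have h := hY.cosh_dist_le hγ hδ hpq hpr ⟨hs, hsq⟩ ⟨hs, hsr⟩
  set X := comparisonCos (dist p q) (dist p r) (dist q r)
  obtain ⟨-, hX₁⟩ := comparisonCos_dist_mem_Icc hpq hpr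
  have hK := sinh_sq_le_mul_sinh_half_sq_mul_sinh_half_sq hD hs hsq hsr hDr
  have hdefect : sinh s ^ 2 * (1 - X) ≤ 4 * (1 + 1 / sinh (D / 2) ^ 2) * ε :=
    calc sinh s ^ 2 * (1 - X)
        ≤ 4 * (1 + 1 / sinh (D / 2) ^ 2) * sinh (dist p q / 2) ^ 2 * sinh (dist p r / 2) ^ 2 *
          (1 - X ^ 2) := mul_le_mul hK (by nlinarith) (by linarith) (by positivity)
      _ = 4 * (1 + 1 / sinh (D / 2) ^ 2) * triangleDefect (dist p q) (dist p r) (dist q r) := by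
        rw [triangleDefect]; ring
      _ ≤ _ := by gcongr
  refine (cosh_le_cosh_iff_of_nonneg dist_nonneg hρ0).1 ?_
  linarith [cosh_sq s]

/-- If `[x, y]` and `[z, w]` both run `ρ`-close along the diagonal `[x, z]`, then `w` is `ρ`-close
to the point of the diagonal at distance `dist x z - dist z w ≤ D'` from `x`, which is either
`ρ`-close to `[x, y]` or lies beyond `y`. -/
theorem le_two_mul_or_dist_le_of_fellowTravel (hAc : GConvex A) (hBc : GConvex B)
    (hsep : ∀ a ∈ A, ∀ b ∈ B, D ≤ dist a b) (hx : x ∈ A) (hy : y ∈ A) (hz : z ∈ B) (hw : w ∈ B)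
    (hxw : dist x w ≤ D') (hρ0 : 0 ≤ ρ) (hγ : IsSegment γ x y) (hδ : IsSegment δ x z)
    (hβ : IsSegment β z w)
    (hγδ : ∀ s, 0 ≤ s → s ≤ dist x y → s ≤ dist x z → dist (γ s) (δ s) ≤ ρ)
    (hβδ : ∀ s, 0 ≤ s → s ≤ dist z w → s ≤ dist x z → dist (β s) (δ (dist x z - s)) ≤ ρ) :
    D ≤ 2 * ρ ∨ dist x y ≤ 2 * ρ + (D' - D) := by
  set u := dist x y
  set e := dist x z
  set v := dist z w
  rcases lt_or_ge e u with heu | hue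
  · have hγe := hAc.mem_of_isSegment hγ hx hy ⟨dist_nonneg, heu.le⟩
    have := hγδ e dist_nonneg heu.le le_rfl
    rw [hδ.2.2] at this
    left; linarith [hsep _ hγe z hz]
  rcases lt_or_ge e v with hev | hve
  · have hβe := hBc.mem_of_isSegment hβ hz hw ⟨dist_nonneg, hev.le⟩
    have := hβδ e dist_nonneg hev.le le_rfl
    rw [sub_self, hδ.2.1, dist_comm] at this
    left; linarith [hsep x hx _ hβe]
  have hδw : dist (δ (e - v)) w ≤ ρ := by
    have := hβδ v dist_nonneg le_rfl hve
    rwa [hβ.2.2, dist_comm] at this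
  have hev : e - v ≤ D' := by
    linarith [dist_triangle x w z, dist_comm w z]
  rcases le_or_gt (e - v) u with hwu | huw
  · have hγw := hAc.mem_of_isSegment hγ hx hy ⟨by linarith, hwu⟩
    left
    linarith [hsep _ hγw w hw, dist_triangle (γ (e - v)) (δ (e - v)) w,
      hγδ (e - v) (by linarith) hwu (by linarith)]
  · have hδuw : dist (δ u) (δ (e - v)) = e - v - u := by
      rw [hδ.dist_eq ⟨dist_nonneg, hue⟩ ⟨by linarith, by linarith [dist_nonneg (x := z) (y := w)]⟩,
        abs_of_nonpos (by linarith)]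
      ring
    have hyu := hγδ u dist_nonneg le_rfl hue
    rw [hγ.2.2] at hyu
    right
    linarith [hsep y hy w hw, dist_triangle4 y (δ u) (δ (e - v)) w]

theorem le_two_mul_or_dist_le_of_comparisonCos_nonneg (hY : CATMinusOne Y) (hAc : GConvex A)
    (hBc : GConvex B) (hD : 0 < D) (hsep : ∀ a ∈ A, ∀ b ∈ B, D ≤ dist a b) (hx : x ∈ A)
    (hy : y ∈ A) (hz : z ∈ B) (hw : w ∈ B) (hxw : dist x w ≤ D') (hyz : dist y z ≤ D')
    (hρ0 : 0 ≤ ρ) (hρ : 1 + 4 * (1 + 1 / sinh (D / 2) ^ 2) * (cosh D' - cosh D) ≤ cosh ρ)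
    (hγ : IsSegment γ x y) (hδ : IsSegment δ x z) (hβ : IsSegment β z w) (hxy : 0 < dist x y)
    (hzw : 0 < dist z w) (hX₁ : 0 ≤ comparisonCos (dist x y) (dist x z) (dist y z))
    (hX₂ : 0 ≤ comparisonCos (dist z w) (dist z x) (dist w x)) :
    D ≤ 2 * ρ ∨ dist x y ≤ 2 * ρ + (D' - D) := by
  have hDxz : D ≤ dist x z := hsep x hx z hz
  have hDzx : D ≤ dist z x := dist_comm x z ▸ hDxz
  have hxz : 0 < dist x z := hD.trans_le hDxz
  have hzx : 0 < dist z x := hD.trans_le hDzx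
  have hδ' := hδ.symm
  have hmid : dist x z - dist z x / 2 = dist x z / 2 := by rw [dist_comm z x]; ring
  -- the diagonal `[x, z]` splits the quadrilateral into two triangles with small defect
  have h₁ := hY.cosh_two_mul_dist_midpoints_add_le hγ hδ hxy hxz
  have h₂ := hY.cosh_two_mul_dist_midpoints_add_le hβ hδ' hzw hzx
  simp only [hmid] at h₂
  have hm := hAc.mem_of_isSegment hγ hx hy (s := dist x y / 2) ⟨by positivity, by linarith⟩
  have hn := hBc.mem_of_isSegment hβ hz hw (s := dist z w / 2) ⟨by positivity, by linarith⟩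
  have hmn : cosh D ≤ (cosh (2 * dist (γ (dist x y / 2)) (δ (dist x z / 2))) +
      cosh (2 * dist (β (dist z w / 2)) (δ (dist x z / 2)))) / 2 :=
    calc cosh D ≤ cosh (dist (γ (dist x y / 2)) (δ (dist x z / 2)) +
          dist (β (dist z w / 2)) (δ (dist x z / 2))) := by
          refine (cosh_le_cosh_iff_of_nonneg hD.le (by positivity)).2 ?_
          linarith [hsep _ hm _ hn, dist_triangle_right (γ (dist x y / 2)) (β (dist z w / 2))
            (δ (dist x z / 2))]
      _ ≤ _ := cosh_add_le _ _
  have hyz' := (cosh_le_cosh_iff_of_nonneg dist_nonneg (dist_nonneg.trans hyz)).2 hyz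
  have hwx' := (cosh_le_cosh_iff_of_nonneg dist_nonneg (dist_nonneg.trans hxw)).2
    (dist_comm w x ▸ hxw)
  have hd₁ := triangleDefect_nonneg hxy hxz (r := z)
  have hd₂ := triangleDefect_nonneg hzw hzx (r := x)
  refine le_two_mul_or_dist_le_of_fellowTravel hAc hBc hsep hx hy hz hw hxw hρ0 hγ hδ hβ
    (fun s hs hsu hse ↦ ?_) (fun s hs hsv hse ↦ ?_)
  · exact hY.dist_le_of_triangleDefect_le hγ hδ hxy hxz hX₁ hD hDxz (by linarith) hρ hρ0 hs hsu hse
  · exact hY.dist_le_of_triangleDefect_le hβ hδ' hzw hzx hX₂ hD hDzx (by linarith) hρ hρ0 hs hsv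
      (dist_comm x z ▸ hse)

theorem cosh_half_mul_cosh_le_or (hY : CATMinusOne Y) (hAc : GConvex A) (hBc : GConvex B)
    (hD : 0 < D) (hsep : ∀ a ∈ A, ∀ b ∈ B, D ≤ dist a b) (hx : x ∈ A) (hy : y ∈ A) (hz : z ∈ B)
    (hw : w ∈ B) (hxw : dist x w ≤ D') (hyz : dist y z ≤ D') (hρ0 : 0 ≤ ρ)
    (hρ : 1 + 4 * (1 + 1 / sinh (D / 2) ^ 2) * (cosh D' - cosh D) ≤ cosh ρ) :
    cosh (dist x y / 2) * cosh D ≤ cosh D' ∨ D ≤ 2 * ρ ∨ dist x y ≤ 2 * ρ + (D' - D) := by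
  obtain ⟨γ, hγ⟩ := hY.exists_isSegment x y
  obtain ⟨δ, hδ⟩ := hY.exists_isSegment x z
  obtain ⟨β, hβ⟩ := hY.exists_isSegment z w
  have hDxz : D ≤ dist x z := hsep x hx z hz
  have hxz : 0 < dist x z := hD.trans_le hDxz
  have hD' : 0 ≤ D' := dist_nonneg.trans hxw
  have hDD' : cosh D ≤ cosh D' :=
    (cosh_le_cosh_iff_of_nonneg hD.le hD').2 ((hsep x hx w hw).trans hxw)
  have hcoshD' {c : ℝ} (h : c ≤ D') (hc : 0 ≤ c) : cosh c ≤ cosh D' :=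
    (cosh_le_cosh_iff_of_nonneg hc hD').2 h
  rcases (dist_nonneg : 0 ≤ dist x y).eq_or_lt with hxy | hxy
  · left; rw [← hxy, zero_div, cosh_zero, one_mul]; exact hDD'
  have hmedian (he : cosh (dist x z) ≤ cosh D') : cosh (dist x y / 2) * cosh D ≤ cosh D' := by
    have hm := hAc.mem_of_isSegment hγ hx hy (s := dist x y / 2)
      ⟨by positivity, by linarith⟩
    have h := hY.two_mul_cosh_half_mul_cosh_dist_midpoint_le hγ hxy hxz
    have := (cosh_le_cosh_iff_of_nonneg hD.le dist_nonneg).2 (hsep _ hm z hz)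
    nlinarith [hcoshD' hyz dist_nonneg, cosh_pos (dist x y / 2)]
  rcases (dist_nonneg : 0 ≤ dist z w).eq_or_lt with hzw | hzw
  · left; apply hmedian
    rw [dist_eq_zero.1 hzw.symm]; exact hcoshD' hxw dist_nonneg
  rcases le_or_gt (comparisonCos (dist x y) (dist x z) (dist y z)) 0 with hX₁ | hX₁
  · left
    calc cosh (dist x y / 2) * cosh D ≤ cosh (dist x y) * cosh (dist x z) := by
          gcongr
          · exact (cosh_le_cosh_iff_of_nonneg (by positivity) dist_nonneg).2 (by linarith)
          · exact (cosh_le_cosh_iff_of_nonneg hD.le dist_nonneg).2 hDxz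
      _ ≤ cosh (dist y z) := cosh_mul_cosh_le_of_comparisonCos_nonpos hxy hxz hX₁
      _ ≤ cosh D' := hcoshD' hyz dist_nonneg
  rcases le_or_gt (comparisonCos (dist z w) (dist z x) (dist w x)) 0 with hX₂ | hX₂
  · left; apply hmedian
    calc cosh (dist x z) ≤ cosh (dist z x) * cosh (dist z w) := by
          rw [dist_comm x z]; exact le_mul_of_one_le_right (cosh_pos _).le (one_le_cosh _)
      _ = cosh (dist z w) * cosh (dist z x) := mul_comm _ _
      _ ≤ cosh (dist w x) :=
          cosh_mul_cosh_le_of_comparisonCos_nonpos hzw (dist_comm x z ▸ hxz) hX₂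
      _ ≤ cosh D' := hcoshD' (dist_comm x w ▸ hxw) dist_nonneg
  right
  exact le_two_mul_or_dist_le_of_comparisonCos_nonneg hY hAc hBc hD hsep hx hy hz hw hxw hyz hρ0
    hρ hγ hδ hβ hxy hzw hX₁.le hX₂.le

theorem exists_pos_forall_dist_lt (hY : CATMinusOne Y) (hAc : GConvex A) (hBc : GConvex B)
    (hD : 0 < D) (hsep : ∀ a ∈ A, ∀ b ∈ B, D ≤ dist a b) {η : ℝ} (hη : 0 < η) :
    ∃ ε > 0, ∀ x ∈ A, ∀ y ∈ A, ∀ z ∈ B, ∀ w ∈ B,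
      dist x w < D + ε → dist y z < D + ε → dist x y < η := by
  set ρ := min D η / 3
  have hρ : 0 < ρ := div_pos (lt_min hD hη) three_pos
  set K := 4 * (1 + 1 / sinh (D / 2) ^ 2)
  have hcosh : Tendsto (fun ε ↦ cosh (D + ε)) (𝓝 0) (𝓝 (cosh D)) := by
    simpa [Function.comp_def] using (continuous_cosh.comp (continuous_const_add D)).tendsto 0
  have h₁ : ∀ᶠ ε in 𝓝 0, cosh (D + ε) < cosh (η / 2) * cosh D :=
    hcosh.eventually_lt_const
      (lt_mul_of_one_lt_left (cosh_pos D) (one_lt_cosh.2 (by positivity)))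
  have h₂ : ∀ᶠ ε in 𝓝 0, 1 + K * (cosh (D + ε) - cosh D) < cosh ρ := by
    refine Tendsto.eventually_lt_const ?_ (((hcosh.sub_const (cosh D)).const_mul K).const_add 1)
    simpa using one_lt_cosh.2 hρ.ne'
  have h₃ : ∀ᶠ ε in 𝓝 (0 : ℝ), ε < η / 3 := eventually_lt_nhds (by positivity)
  obtain ⟨ε, ⟨h₁, h₂, h₃⟩, hε⟩ :=
    ((h₁.and (h₂.and h₃)).filter_mono nhdsWithin_le_nhds |>.and
      (self_mem_nhdsWithin : Ioi (0 : ℝ) ∈ 𝓝[>] 0)).exists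
  refine ⟨ε, hε, fun x hx y hy z hz w hw hxw hyz ↦ ?_⟩
  by_contra! hxy
  have hρD : ρ ≤ D / 3 := div_le_div_of_nonneg_right (min_le_left D η) zero_le_three
  have hρη : ρ ≤ η / 3 := div_le_div_of_nonneg_right (min_le_right D η) zero_le_three
  rcases hY.cosh_half_mul_cosh_le_or hAc hBc hD hsep hx hy hz hw hxw.le hyz.le hρ.le h₂.le with
    h | h | h
  · have := (cosh_le_cosh_iff_of_nonneg (by positivity) (by positivity)).2
      (div_le_div_of_nonneg_right hxy zero_le_two)
    nlinarith [cosh_pos D]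
  · linarith
  · linarith

theorem cauchySeq_of_tendsto_dist (hY : CATMinusOne Y) (hAc : GConvex A) (hBc : GConvex B)
    (hD : 0 < D) (hsep : ∀ a ∈ A, ∀ b ∈ B, D ≤ dist a b) {x b : ℕ → Y} (hx : ∀ n, x n ∈ A)
    (hb : ∀ n, b n ∈ B) (hxb : Tendsto (fun n ↦ dist (x n) (b n)) atTop (𝓝 D)) :
    CauchySeq x := by
  refine Metric.cauchySeq_iff'.2 fun η hη ↦ ?_
  obtain ⟨ε, hε, h⟩ := hY.exists_pos_forall_dist_lt hAc hBc hD hsep hη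
  obtain ⟨N, hN⟩ := eventually_atTop.1 (hxb.eventually_lt_const (lt_add_of_pos_right D hε))
  exact ⟨N, fun n hn ↦ h _ (hx n) _ (hx N) _ (hb N) _ (hb n) (hN n hn) (hN N le_rfl)⟩

theorem eq_of_dist_eq (hY : CATMinusOne Y) (hAc : GConvex A) (hBc : GConvex B) (hD : 0 < D)
    (hsep : ∀ a ∈ A, ∀ b ∈ B, D ≤ dist a b) {x y z w : Y} (hx : x ∈ A) (hy : y ∈ A) (hz : z ∈ B)
    (hw : w ∈ B) (hxw : dist x w = D) (hyz : dist y z = D) : x = y :=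
  eq_of_forall_dist_le fun η hη ↦ by
    obtain ⟨ε, hε, h⟩ := hY.exists_pos_forall_dist_lt hAc hBc hD hsep hη
    exact (h x hx y hy z hz w hw (by linarith) (by linarith)).le

end CATMinusOne

theorem statement18_general {Y : Type*} [MetricSpace Y] [CompleteSpace Y]
    (hY : CATMinusOne Y) (A B : Set Y) (hA : IsClosed A) (hB : IsClosed B)
    (hAc : GConvex A) (hBc : GConvex B)
    (D : ℝ) (hD : D = setDist A B) (hDpos : 0 < D)
    (x : ℕ → Y) (hx : ∀ i, x i ∈ A)
    (hlim : Filter.Tendsto (fun i => Metric.infDist (x i) B) Filter.atTop (nhds D)) :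
    CauchySeq x ∧ ∃! p : Y × Y, p.1 ∈ A ∧ p.2 ∈ B ∧ dist p.1 p.2 = D := by
  have hsep : ∀ a ∈ A, ∀ b ∈ B, D ≤ dist a b := fun a ha b hb ↦ hD ▸ setDist_le_dist ha hb
  have hsep' : ∀ b ∈ B, ∀ a ∈ A, D ≤ dist b a := fun b hb a ha ↦ dist_comm a b ▸ hsep a ha b hb
  obtain ⟨b, hb, hxb⟩ := exists_seq_tendsto_dist_of_tendsto_infDist
    (nonempty_of_setDist_ne_zero (hD ▸ hDpos.ne')) hlim
  have hxC := hY.cauchySeq_of_tendsto_dist hAc hBc hDpos hsep hx hb hxb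
  have hbC := hY.cauchySeq_of_tendsto_dist hBc hAc hDpos hsep' hb hx
    (by simpa only [dist_comm] using hxb)
  obtain ⟨p, hp⟩ := cauchySeq_tendsto_of_complete hxC
  obtain ⟨q, hq⟩ := cauchySeq_tendsto_of_complete hbC
  have hpA := hA.mem_of_tendsto hp (.of_forall hx)
  have hqB := hB.mem_of_tendsto hq (.of_forall hb)
  have hpq : dist p q = D := tendsto_nhds_unique (hp.dist hq) hxb
  refine ⟨hxC, (p, q), ⟨hpA, hqB, hpq⟩, fun ⟨p', q'⟩ ⟨hp', hq', hpq'⟩ ↦ Prod.ext ?_ ?_⟩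
  · exact hY.eq_of_dist_eq hAc hBc hDpos hsep hp' hpA hqB hq' hpq' hpq
  · exact hY.eq_of_dist_eq hBc hAc hDpos hsep' hq' hqB hpA hp' (dist_comm p' q' ▸ hpq')
      (dist_comm p q ▸ hpq)

/-- In a Hadamard manifold of curvature at most `-1`
(formalized: a complete simply connected CAT(-1) space), for disjoint closed
convex `A, B` at distance `D > 0`, any sequence `x i ∈ A` with
`dist(x i, B) → D` is Cauchy; consequently the pair of nearest points realizing
`dist(A,B)` exists and is unique. -/
theorem statement18 {Y : Type*} [MetricSpace Y] [CompleteSpace Y] [SimplyConnectedSpace Y]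
    (hY : CATMinusOne Y) (A B : Set Y) (hA : IsClosed A) (hB : IsClosed B)
    (hAc : GConvex A) (hBc : GConvex B) (hdisj : Disjoint A B)
    (D : ℝ) (hD : D = setDist A B) (hDpos : 0 < D)
    (x : ℕ → Y) (hx : ∀ i, x i ∈ A)
    (hlim : Filter.Tendsto (fun i => Metric.infDist (x i) B) Filter.atTop (nhds D)) :
    CauchySeq x ∧ ∃! p : Y × Y, p.1 ∈ A ∧ p.2 ∈ B ∧ dist p.1 p.2 = D :=
  statement18_general hY A B hA hB hAc hBc D hD hDpos x hx hlim
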